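/- Let ℓ be a prime and let F be a finite extension of ℚ_p for some prime p (a non-Archimedean local field of characteristic zero). Let Ξ be an algebraic extension of F containing μ_ℓ and satisfying Ξ^× = Ξ^{×ℓ}. Then ℓ^∞ divides the supernatural degree [Ξ : F]; that is, for every n ≥ 1 there exists a finite subextension F ⊆ F' ⊆ Ξ with ℓⁿ dividing [F' : F]. -/

import Mathlib

open scoped Classical
set_option synthInstance.maxHeartbeats 1000000
set_option maxHeartbeats 1000000
noncomputable section
universe u
namespace NU

def avComap {K L : Type*} [Field K] [Field L] (f : K →+* L) (v : AbsoluteValue L ℝ) :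
    AbsoluteValue K ℝ where
  toFun x := v (f x)
  map_mul' x y := by simp
  nonneg' x := v.nonneg _
  eq_zero' x := by simp
  add_le' x y := by simpa using v.add_le (f x) (f y)

def IsAdmissible {K : Type*} [Field K] [CharZero K] (v : AbsoluteValue K ℝ) : Prop :=
  ∃ q : ℚ, q ≠ 0 ∧ v (q : K) ≠ 1

instance placeSetoid (K : Type*) [Field K] [CharZero K] :
    Setoid {v : AbsoluteValue K ℝ // IsAdmissible v} where
  r v w := ∀ x : K, v.1 x < 1 ↔ w.1 x < 1
  iseqv := ⟨fun _ _ => Iff.rfl, fun h x => (h x).symm, fun h₁ h₂ x => (h₁ x).trans (h₂ x)⟩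

def Place (K : Type u) [Field K] [CharZero K] : Type u :=
  Quotient (placeSetoid K)

def Place.comap {K L : Type*} [Field K] [CharZero K] [Field L] [CharZero L]
    (f : K →+* L) (𝔓 : Place L) : Place K :=
  Quotient.map
    (fun v => ⟨avComap f v.1, by
      obtain ⟨q, hq, hv⟩ := v.2
      exact ⟨q, hq, by simpa [avComap] using hv⟩⟩)
    (fun v w h => by intro x; exact h (f x)) 𝔓

@[simp] lemma Place.comap_id {K : Type*} [Field K] [CharZero K] (𝔓 : Place K) :
    Place.comap (RingHom.id K) 𝔓 = 𝔓 :=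
  Quotient.inductionOn 𝔓 fun _ => Quotient.sound fun _ => Iff.rfl

lemma Place.comap_comp {K L M : Type*} [Field K] [CharZero K] [Field L] [CharZero L]
    [Field M] [CharZero M] (f : K →+* L) (g : L →+* M) (𝔓 : Place M) :
    Place.comap f (Place.comap g 𝔓) = Place.comap (g.comp f) 𝔓 :=
  Quotient.inductionOn 𝔓 fun _ => Quotient.sound fun _ => Iff.rfl

def Place.IsFinite {K : Type*} [Field K] [CharZero K] (𝔓 : Place K) : Prop :=
  ∃ v : {v : AbsoluteValue K ℝ // IsAdmissible v}, ⟦v⟧ = 𝔓 ∧ IsNonarchimedean (v.1 ·)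

/-! ### The Galois action on places -/

/-- The natural action of the Galois group on the places of a field:
`g • 𝔓` is the pushforward of `𝔓` along `g`, i.e. the pullback along `g⁻¹`. -/
instance galPlaceAction (K Ω : Type*) [Field K] [Field Ω] [CharZero Ω] [Algebra K Ω] :
    MulAction (Ω ≃ₐ[K] Ω) (Place Ω) where
  smul g 𝔓 := Place.comap (g.symm : Ω ≃ₐ[K] Ω).toRingHom 𝔓
  one_smul 𝔓 := Quotient.inductionOn 𝔓 fun v => Quotient.sound fun x => Iff.rfl
  mul_smul g h 𝔓 := Quotient.inductionOn 𝔓 fun v => Quotient.sound fun x => Iff.rfl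

/-- The decomposition subgroup of a place `𝔓` of `Ω` in `Gal(Ω/K)`:
the subgroup of elements fixing `𝔓`. -/
def decompositionSubgroup (K : Type*) {Ω : Type*} [Field K] [Field Ω] [CharZero Ω]
    [Algebra K Ω] (𝔓 : Place Ω) : Subgroup (Ω ≃ₐ[K] Ω) :=
  MulAction.stabilizer (Ω ≃ₐ[K] Ω) 𝔓

/-! ### Rational places -/

/-- The `p`-adic absolute value on `ℚ`, as a real-valued `AbsoluteValue`. -/
def padicAbs (p : ℕ) [hp : Fact p.Prime] : AbsoluteValue ℚ ℝ where
  toFun q := (padicNorm p q : ℝ)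
  map_mul' x y := by
    show ((padicNorm p (x * y) : ℚ) : ℝ) = _
    push_cast [padicNorm.mul]; ring
  nonneg' x := by
    show (0 : ℝ) ≤ ((padicNorm p x : ℚ) : ℝ)
    exact_mod_cast padicNorm.nonneg x
  eq_zero' x := by
    show ((padicNorm p x : ℚ) : ℝ) = 0 ↔ x = 0
    constructor
    · intro h; exact padicNorm.zero_of_padicNorm_eq_zero (by exact_mod_cast h)
    · intro h; simp [h]
  add_le' x y := by
    show ((padicNorm p (x + y) : ℚ) : ℝ) ≤ ((padicNorm p x : ℚ) : ℝ) + ((padicNorm p y : ℚ) : ℝ)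
    exact_mod_cast padicNorm.triangle_ineq (p := p) x y

lemma padicAbs_admissible (p : ℕ) [hp : Fact p.Prime] : IsAdmissible (padicAbs p) := by
  refine ⟨p, by exact_mod_cast hp.out.ne_zero, ?_⟩
  have h1 : (1 : ℕ) < p := hp.out.one_lt
  have : padicNorm p p = (p : ℚ)⁻¹ := padicNorm.padicNorm_p (by exact_mod_cast h1)
  simp only [padicAbs, Rat.cast_natCast, AbsoluteValue.coe_mk, MulHom.coe_mk]
  rw [show ((p : ℚ) : ℚ) = (p : ℚ) by norm_cast, this]
  intro hc
  have hp1 : (1 : ℝ) < p := by exact_mod_cast h1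
  rw [show ((((p : ℚ)⁻¹ : ℚ)) : ℝ) = (p : ℝ)⁻¹ by push_cast; ring] at hc
  have := inv_lt_one_of_one_lt₀ hp1
  rw [hc] at this
  exact lt_irrefl 1 this

/-- The finite place of `ℚ` corresponding to the prime `p`. -/
def ratFinPlace (p : ℕ) [Fact p.Prime] : Place ℚ :=
  ⟦⟨padicAbs p, padicAbs_admissible p⟩⟧

/-- A place of a characteristic-zero field lies over the prime number `p`. -/
def Place.Over {K : Type*} [Field K] [CharZero K] (𝔓 : Place K) (p : ℕ)
    [Fact p.Prime] : Prop :=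
  Place.comap (Rat.castHom K) 𝔓 = ratFinPlace p

/-! ### Splitting and decomposition -/

/-- A place `𝔓` of `Ω` splits completely in a finite extension `Ω'/Ω` if the number of
places of `Ω'` lying over `𝔓` equals the degree `[Ω' : Ω]`. -/
def SplitsCompletely (Ω Ω' : Type*) [Field Ω] [CharZero Ω] [Field Ω'] [CharZero Ω']
    [Algebra Ω Ω'] (𝔓 : Place Ω) : Prop :=
  Nat.card {𝔔 : Place Ω' // Place.comap (algebraMap Ω Ω') 𝔔 = 𝔓} = Module.finrank Ω Ω'

/-- A place `𝔓` of `Ω` is indecomposable in an extension `Ω'/Ω` if there is exactly one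
place of `Ω'` lying over it. -/
def Indecomposable (Ω Ω' : Type*) [Field Ω] [CharZero Ω] [Field Ω'] [CharZero Ω']
    [Algebra Ω Ω'] (𝔓 : Place Ω) : Prop :=
  ∃! 𝔔 : Place Ω', Place.comap (algebraMap Ω Ω') 𝔔 = 𝔓

/-! ### `ℓ`-sealed extensions -/

/-- An algebraic extension `Ω` of `ℚ` is `ℓ`-sealed with respect to a set `S` of places
of `ℚ` if `μ_ℓ ⊆ Ω` and there is no `ℤ/ℓℤ`-extension of `Ω` in which every place of `Ω`
lying over `S` splits completely. -/
def IsSealedWrt (ℓ : ℕ) (S : Set (Place ℚ)) (Ω : Type u) [Field Ω] [CharZero Ω] : Prop :=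
  (∃ ζ : Ω, IsPrimitiveRoot ζ ℓ) ∧
  ∀ (Ω' : Type u) [Field Ω'] [CharZero Ω'] [Algebra Ω Ω'],
    IsGalois Ω Ω' → Module.finrank Ω Ω' = ℓ →
      (∀ 𝔓 : Place Ω, Place.comap (Rat.castHom Ω) 𝔓 ∈ S → SplitsCompletely Ω Ω' 𝔓) → False

/-- An algebraic extension `Ω` of `ℚ` is `ℓ`-sealed if it is `ℓ`-sealed with respect to
some finite set of places of `ℚ`. -/
def IsSealed (ℓ : ℕ) (Ω : Type u) [Field Ω] [CharZero Ω] : Prop :=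
  ∃ S : Set (Place ℚ), S.Finite ∧ IsSealedWrt ℓ S Ω

/-- Any normed field is a completable topological field. -/
theorem completableTopField_of_normedField (K : Type*) [NormedField K] :
    CompletableTopField K where
  nice F hF hi := by
    -- find `ε > 0` such that `{x | ε ≤ ‖x‖} ∈ F`
    obtain ⟨U, hU, V, hV, hUV⟩ := Filter.inf_eq_bot_iff.mp hi
    obtain ⟨ε, hε, hball⟩ := Metric.mem_nhds_iff.mp hU
    have hVε : ∀ x ∈ V, ε ≤ ‖x‖ := by
      intro x hx
      by_contra h
      push_neg at h
      have hxU : x ∈ U := hball (by simpa [Metric.mem_ball, dist_zero_right] using h)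
      have : x ∈ U ∩ V := ⟨hxU, hx⟩
      rw [hUV] at this
      exact this
    rw [Metric.cauchy_iff] at hF ⊢
    obtain ⟨hne, hsmall⟩ := hF
    refine ⟨hne.map _, ?_⟩
    intro δ hδ
    obtain ⟨t, ht, hts⟩ := hsmall (δ * ε * ε) (by positivity)
    refine ⟨(fun x => x⁻¹) '' (t ∩ V), Filter.image_mem_map (Filter.inter_mem ht hV), ?_⟩
    rintro _ ⟨x, ⟨hxt, hxV⟩, rfl⟩ _ ⟨y, ⟨hyt, hyV⟩, rfl⟩
    have hεx := hVε x hxV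
    have hεy := hVε y hyV
    have hx0 : x ≠ 0 := by
      intro h; rw [h, norm_zero] at hεx; linarith
    have hy0 : y ≠ 0 := by
      intro h; rw [h, norm_zero] at hεy; linarith
    have hxn : (0:ℝ) < ‖x‖ := lt_of_lt_of_le hε hεx
    have hyn : (0:ℝ) < ‖y‖ := lt_of_lt_of_le hε hεy
    have key : dist x⁻¹ y⁻¹ = dist x y / (‖x‖ * ‖y‖) := by
      rw [dist_eq_norm, dist_eq_norm, show x⁻¹ - y⁻¹ = (y - x) * (x⁻¹ * y⁻¹) by
        field_simp, norm_mul, norm_mul, norm_inv, norm_inv, norm_sub_rev]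
      field_simp
    rw [key]
    have hd : dist x y < δ * ε * ε := hts x hxt y hyt
    have hεε : ε * ε ≤ ‖x‖ * ‖y‖ :=
      mul_le_mul hεx hεy (le_of_lt hε) (le_of_lt (lt_of_lt_of_le hε hεx))
    have h1 : dist x y / (‖x‖ * ‖y‖) ≤ dist x y / (ε * ε) :=
      div_le_div_of_nonneg_left dist_nonneg (by positivity) hεε
    have h2 : dist x y / (ε * ε) < δ := by
      rw [div_lt_iff₀ (by positivity)]
      calc dist x y < δ * ε * ε := hd
        _ = δ * (ε * ε) := by ring
    exact lt_of_le_of_lt h1 h2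

/-! ### Completions at places -/

instance withAbsCompletable {K : Type*} [Field K] (v : AbsoluteValue K ℝ) :
    CompletableTopField (WithAbs v) :=
  completableTopField_of_normedField _

/-- A chosen representative absolute value of a place. -/
def Place.rep {K : Type*} [Field K] [CharZero K] (𝔓 : Place K) : AbsoluteValue K ℝ :=
  (Quotient.out 𝔓).1

/-- The completion of `K` at the place `𝔓`. -/
abbrev Place.Compl {K : Type u} [Field K] [CharZero K] (𝔓 : Place K) : Type u :=
  (𝔓.rep).Completion

/-- The canonical embedding of `K` into its completion at `𝔓`. -/
def Place.emb {K : Type*} [Field K] [CharZero K] (𝔓 : Place K) : K →+* 𝔓.Compl :=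
  (UniformSpace.Completion.coeRingHom).comp
    ((WithAbs.equiv 𝔓.rep).symm : K ≃+* WithAbs 𝔓.rep).toRingHom

/-- For an algebraic extension `Ω/ℚ` and a place `𝔓` of `Ω`, the field `Ω_𝔓`:
the union, over the number fields `F` contained in `Ω`, of the completions `F_{𝔓|F}`
(realized as the closures of the images of the `F` inside the completion of `Ω` at `𝔓`). -/
def Place.localField {Ω : Type*} [Field Ω] [CharZero Ω] (𝔓 : Place Ω) :
    Subfield 𝔓.Compl :=
  ⨆ (F : Subfield Ω) (_ : FiniteDimensional ℚ ↥F),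
    ((𝔓.emb.comp F.subtype).fieldRange).topologicalClosure

/-- The completion `k_{𝔓|k}` of a base field `k → Ω` at (the restriction of) `𝔓`,
realized as the closure of the image of `k` in the completion of `Ω` at `𝔓`. -/
def Place.baseCompletion {k Ω : Type*} [Field k] [Field Ω] [CharZero Ω]
    (f : k →+* Ω) (𝔓 : Place Ω) : Subfield 𝔓.Compl :=
  ((𝔓.emb.comp f).fieldRange).topologicalClosure

/-- `n` divides the supernatural degree `[Ω_𝔓 : k_𝔭]`, i.e. there is a finite
subextension of `Ω_𝔓 / k_𝔭` whose degree is divisible by `n`. -/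
def LocalDegreeDvd {k Ω : Type*} [Field k] [Field Ω] [CharZero Ω] (f : k →+* Ω)
    (𝔓 : Place Ω) (n : ℕ) : Prop :=
  ∃ (E : Subfield 𝔓.Compl) (hKE : Place.baseCompletion f 𝔓 ≤ E),
    E ≤ Place.localField 𝔓 ∧
    (letI : Algebra ↥(Place.baseCompletion f 𝔓) ↥E := (Subfield.inclusion hKE).toAlgebra
     FiniteDimensional ↥(Place.baseCompletion f 𝔓) ↥E ∧
     n ∣ Module.finrank ↥(Place.baseCompletion f 𝔓) ↥E)

/-! ### The topology on the set of places -/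

/-- The inverse-limit topology on the places of an algebraic extension of `ℚ`:
the coarsest topology making the restriction to every number field
(with the discrete topology on its set of places) continuous. -/
instance placeTopology (E : Type*) [Field E] [CharZero E] : TopologicalSpace (Place E) :=
  ⨅ (F : {F : Subfield E // FiniteDimensional ℚ ↥F}),
    TopologicalSpace.induced (Place.comap F.1.subtype) ⊥

/-! ### Value groups, ramification indices and tame ramification -/

/-- The value group of an absolute value, as a subgroup of `ℝˣ`. -/
def vGroup {F : Type*} [Field F] (v : AbsoluteValue F ℝ) : Subgroup ℝˣ :=
  MonoidHom.range
    { toFun := fun u : Fˣ => Units.mk0 (v u.1) (v.ne_zero u.ne_zero)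
      map_one' := by ext; simp
      map_mul' := fun u w => by ext; simp }

/-- The ramification index of a place `𝔓'` of an extension `Ω'` over a base `Ω`:
the index of the value group of `Ω` in the value group of `Ω'`. -/
def ramIndex {Ω Ω' : Type*} [Field Ω] [Field Ω'] [CharZero Ω'] (f : Ω →+* Ω')
    (𝔓' : Place Ω') : ℕ :=
  Subgroup.relIndex (vGroup (avComap f 𝔓'.rep)) (vGroup 𝔓'.rep)

/-- An extension `Ω'/Ω` of algebraic extensions of `ℚ` is tamely ramified (at every
finite place) if for every prime `p` and every place `𝔓'` of `Ω'` lying over `p`, the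
ramification index of `𝔓'` over `Ω` is not divisible by `p`. -/
def IsTamelyRamified (Ω Ω' : Type*) [Field Ω] [CharZero Ω] [Field Ω'] [CharZero Ω']
    [Algebra Ω Ω'] : Prop :=
  ∀ (p : ℕ) (hp : p.Prime) (𝔓' : Place Ω'),
    (haveI : Fact p.Prime := ⟨hp⟩; 𝔓'.Over p) → ¬ p ∣ ramIndex (algebraMap Ω Ω') 𝔓'

/-! ### Continuous (locally constant) cohomology of topological groups -/

section Cohomology

variable (G : Type*) [Group G] [TopologicalSpace G]
variable (M : Type*) [CommGroup M] (ρ : G →* MulAut M)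

/-- Continuous (= locally constant, for a discrete module) 2-cocycles. -/
def Z2 : Subgroup (G → G → M) where
  carrier := {f | IsLocallyConstant (fun p : G × G => f p.1 p.2) ∧
    ∀ g₁ g₂ g₃, ρ g₁ (f g₂ g₃) * f g₁ (g₂ * g₃) = f (g₁ * g₂) g₃ * f g₁ g₂}
  one_mem' := ⟨IsLocallyConstant.const 1, fun g₁ g₂ g₃ => by simp⟩
  mul_mem' := by
    rintro a b ⟨hac, ha⟩ ⟨hbc, hb⟩
    refine ⟨hac.mul hbc, fun g₁ g₂ g₃ => ?_⟩
    simp only [Pi.mul_apply, map_mul]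
    rw [mul_mul_mul_comm, ha g₁ g₂ g₃, hb g₁ g₂ g₃, mul_mul_mul_comm]
  inv_mem' := by
    rintro a ⟨hac, ha⟩
    refine ⟨hac.inv, fun g₁ g₂ g₃ => ?_⟩
    simp only [Pi.inv_apply, map_inv]
    rw [← mul_inv, ha g₁ g₂ g₃, mul_inv]

/-- Continuous 2-coboundaries. -/
def B2 : Subgroup (G → G → M) where
  carrier := {f | ∃ h : G → M, IsLocallyConstant h ∧
    ∀ g₁ g₂, f g₁ g₂ = ρ g₁ (h g₂) * (h (g₁ * g₂))⁻¹ * h g₁}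
  one_mem' := ⟨1, IsLocallyConstant.const 1, fun g₁ g₂ => by simp⟩
  mul_mem' := by
    rintro a b ⟨h₁, hc₁, he₁⟩ ⟨h₂, hc₂, he₂⟩
    refine ⟨h₁ * h₂, hc₁.mul hc₂, fun g₁ g₂ => ?_⟩
    simp only [Pi.mul_apply, map_mul, mul_inv]
    rw [he₁ g₁ g₂, he₂ g₁ g₂]
    ac_rfl
  inv_mem' := by
    rintro a ⟨h, hc, he⟩
    refine ⟨h⁻¹, hc.inv, fun g₁ g₂ => ?_⟩
    simp only [Pi.inv_apply, map_inv, inv_inv]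
    rw [he g₁ g₂]
    simp only [mul_inv, inv_inv]
    try ac_rfl

/-- The second continuous cohomology group of a topological group `G` with coefficients
in a (discrete) `G`-module `M`, the action being given by `ρ : G →* MulAut M`. -/
def ContH2 := Z2 G M ρ ⧸ ((B2 G M ρ).subgroupOf (Z2 G M ρ))

instance contH2CommGroup : CommGroup (ContH2 G M ρ) :=
  QuotientGroup.Quotient.commGroup _

/-- Continuous 1-cocycles (crossed homomorphisms). -/
def Z1 : Subgroup (G → M) where
  carrier := {f | IsLocallyConstant f ∧ ∀ g₁ g₂, f (g₁ * g₂) = ρ g₁ (f g₂) * f g₁}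
  one_mem' := ⟨IsLocallyConstant.const 1, fun g₁ g₂ => by simp⟩
  mul_mem' := by
    rintro a b ⟨hac, ha⟩ ⟨hbc, hb⟩
    refine ⟨hac.mul hbc, fun g₁ g₂ => ?_⟩
    simp only [Pi.mul_apply, map_mul]
    rw [ha g₁ g₂, hb g₁ g₂]
    ac_rfl
  inv_mem' := by
    rintro a ⟨hac, ha⟩
    refine ⟨hac.inv, fun g₁ g₂ => ?_⟩
    simp only [Pi.inv_apply, map_inv]
    rw [ha g₁ g₂]
    simp only [mul_inv]
    try ac_rfl

/-- Continuous 1-coboundaries (principal crossed homomorphisms). -/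
def B1 : Subgroup (G → M) where
  carrier := {f | ∃ m : M, ∀ g, f g = ρ g m * m⁻¹}
  one_mem' := ⟨1, fun g => by simp⟩
  mul_mem' := by
    rintro a b ⟨m₁, h₁⟩ ⟨m₂, h₂⟩
    refine ⟨m₁ * m₂, fun g => ?_⟩
    simp only [Pi.mul_apply, map_mul, mul_inv]
    rw [h₁ g, h₂ g]
    try ac_rfl
  inv_mem' := by
    rintro a ⟨m, h⟩
    refine ⟨m⁻¹, fun g => ?_⟩
    simp only [Pi.inv_apply, map_inv, inv_inv]
    rw [h g]
    simp only [mul_inv, inv_inv]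

/-- The first continuous cohomology group. -/
def ContH1 := Z1 G M ρ ⧸ ((B1 G M ρ).subgroupOf (Z1 G M ρ))

instance contH1CommGroup : CommGroup (ContH1 G M ρ) :=
  QuotientGroup.Quotient.commGroup _

/-- The zeroth cohomology group: the subgroup of invariants `M^G`. -/
def ContH0 : Subgroup M where
  carrier := {m | ∀ g, ρ g m = m}
  one_mem' := fun g => by simp
  mul_mem' := by
    intro a b ha hb g
    rw [map_mul, ha g, hb g]
  inv_mem' := by
    intro a ha g
    rw [map_inv, ha g]

/-- The `n`-torsion subgroup of a commutative group. -/
def torsionSub (n : ℕ) (A : Type*) [CommGroup A] : Subgroup A where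
  carrier := {x | x ^ n = 1}
  one_mem' := by simp
  mul_mem' := by
    intro a b ha hb
    simp only [Set.mem_setOf_eq] at *
    rw [mul_pow, ha, hb, mul_one]
  inv_mem' := by
    intro a ha
    simp only [Set.mem_setOf_eq] at *
    rw [inv_pow, ha, inv_one]

variable {G M}
variable {N : Type*} [CommGroup N] {σ : G →* MulAut N}

/-- The map on 2-cocycles induced by a `G`-equivariant homomorphism of modules. -/
def z2Push (φ : M →* N) (hφ : ∀ g m, φ (ρ g m) = σ g (φ m)) :
    ↥(Z2 G M ρ) →* ↥(Z2 G N σ) where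
  toFun f := ⟨fun g₁ g₂ => φ (f.1 g₁ g₂),
    ⟨f.2.1.comp φ, fun g₁ g₂ g₃ => by
      rw [← hφ, ← map_mul, f.2.2 g₁ g₂ g₃, map_mul]⟩⟩
  map_one' := by
    apply Subtype.ext
    funext g₁ g₂
    exact map_one φ
  map_mul' f₁ f₂ := by
    apply Subtype.ext
    funext g₁ g₂
    exact map_mul φ _ _

/-- The map on `H²` induced by a `G`-equivariant homomorphism of modules. -/
def h2Push (φ : M →* N) (hφ : ∀ g m, φ (ρ g m) = σ g (φ m)) :
    ContH2 G M ρ →* ContH2 G N σ :=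
  QuotientGroup.map _ _ (z2Push ρ φ hφ) (by
    rintro ⟨f, hf⟩ hmem
    rw [Subgroup.mem_comap, Subgroup.mem_subgroupOf]
    obtain ⟨h, hc, he⟩ := hmem
    refine ⟨φ ∘ h, hc.comp φ, fun g₁ g₂ => ?_⟩
    have he' : f g₁ g₂ = (ρ g₁) (h g₂) * (h (g₁ * g₂))⁻¹ * h g₁ := he g₁ g₂
    show φ (f g₁ g₂) = _
    rw [he']
    simp only [Function.comp_apply, map_mul, map_inv, hφ])

/-- The restriction map on 2-cocycles along a continuous group homomorphism. -/
def z2Res {H : Type*} [Group H] [TopologicalSpace H] (j : H →* G) (hj : Continuous j) :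
    ↥(Z2 G M ρ) →* ↥(Z2 H M (ρ.comp j)) where
  toFun f := ⟨fun h₁ h₂ => f.1 (j h₁) (j h₂),
    ⟨f.2.1.comp_continuous ((hj.comp continuous_fst).prodMk (hj.comp continuous_snd)),
      fun h₁ h₂ h₃ => by
      simp only [MonoidHom.comp_apply, map_mul]
      exact f.2.2 (j h₁) (j h₂) (j h₃)⟩⟩
  map_one' := rfl
  map_mul' _ _ := rfl

/-- The restriction map on `H²` along a continuous group homomorphism. -/
def h2Res {H : Type*} [Group H] [TopologicalSpace H] (j : H →* G) (hj : Continuous j) :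
    ContH2 G M ρ →* ContH2 H M (ρ.comp j) :=
  QuotientGroup.map _ _ (z2Res ρ j hj) (by
    rintro ⟨f, hf⟩ hmem
    rw [Subgroup.mem_comap, Subgroup.mem_subgroupOf]
    obtain ⟨h, hc, he⟩ := hmem
    refine ⟨h ∘ j, hc.comp_continuous hj, fun h₁ h₂ => ?_⟩
    have he' : ∀ a b, f a b = (ρ a) (h b) * (h (a * b))⁻¹ * h a := he
    show f (j h₁) (j h₂) = _
    simp only [Function.comp_apply, MonoidHom.comp_apply, map_mul]
    exact he' (j h₁) (j h₂))

end Cohomology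

/-! ### Galois actions on units, roots of unity, and `K^×/K^{×ℓ}` -/

section GaloisModules

variable (K Ω : Type*) [Field K] [Field Ω] [Algebra K Ω]

/-- The action of the Galois group on the units of the top field. -/
def galUnitsAut : (Ω ≃ₐ[K] Ω) →* MulAut Ωˣ where
  toFun g := Units.mapEquiv g.toRingEquiv.toMulEquiv
  map_one' := by ext u; rfl
  map_mul' g h := by ext u; rfl

variable (ℓ : ℕ)

lemma rootsOfUnity_map_galUnits (g : Ω ≃ₐ[K] Ω) (x : Ωˣ) (hx : x ∈ rootsOfUnity ℓ Ω) :
    galUnitsAut K Ω g x ∈ rootsOfUnity ℓ Ω := by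
  rw [mem_rootsOfUnity] at hx ⊢
  rw [← map_pow, hx]
  simp

/-- The action of the Galois group on the group `μ_ℓ` of `ℓ`-th roots of unity. -/
def galMuAut : (Ω ≃ₐ[K] Ω) →* MulAut ↥(rootsOfUnity ℓ Ω) where
  toFun g :=
    { toFun := fun x => ⟨galUnitsAut K Ω g x.1, rootsOfUnity_map_galUnits K Ω ℓ g x.1 x.2⟩
      invFun := fun x => ⟨galUnitsAut K Ω g⁻¹ x.1, rootsOfUnity_map_galUnits K Ω ℓ g⁻¹ x.1 x.2⟩
      left_inv := fun x => by
        apply Subtype.ext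
        show galUnitsAut K Ω g⁻¹ (galUnitsAut K Ω g x.1) = x.1
        rw [map_inv]
        exact (galUnitsAut K Ω g).symm_apply_apply x.1
      right_inv := fun x => by
        apply Subtype.ext
        show galUnitsAut K Ω g (galUnitsAut K Ω g⁻¹ x.1) = x.1
        rw [map_inv]
        exact (galUnitsAut K Ω g).apply_symm_apply x.1
      map_mul' := fun x y => by
        apply Subtype.ext
        exact map_mul (galUnitsAut K Ω g).toMonoidHom x.1 y.1 }
  map_one' := by
    apply MulEquiv.ext
    intro x
    apply Subtype.ext
    show galUnitsAut K Ω 1 x.1 = x.1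
    rw [map_one]
    rfl
  map_mul' g h := by
    apply MulEquiv.ext
    intro x
    apply Subtype.ext
    show galUnitsAut K Ω (g * h) x.1 = _
    rw [map_mul]
    rfl

/-- `F^×/F^{×ℓ}`, the multiplicative group modulo `ℓ`-th powers. -/
def modEll (F : Type*) [Field F] : Type _ :=
  Fˣ ⧸ (powMonoidHom ℓ : Fˣ →* Fˣ).range

instance modEllCommGroup (F : Type*) [Field F] : CommGroup (modEll ℓ F) :=
  QuotientGroup.Quotient.commGroup _

/-- The map `F^×/F^{×ℓ} → G^×/G^{×ℓ}` induced by a field embedding. -/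
def modEllMap {F G : Type*} [Field F] [Field G] (f : F →+* G) :
    modEll ℓ F →* modEll ℓ G :=
  QuotientGroup.map _ _ (Units.map (f : F →* G)) (by
    rintro x ⟨y, rfl⟩
    exact ⟨Units.map (f : F →* G) y, by
      simp only [powMonoidHom_apply, ← map_pow]⟩)

/-- The action of the Galois group on `Ω^×/Ω^{×ℓ}`. -/
def galModEllAut : (Ω ≃ₐ[K] Ω) →* MulAut (modEll ℓ Ω) where
  toFun g :=
    { toFun := modEllMap ℓ (g : Ω →+* Ω)
      invFun := modEllMap ℓ (g.symm : Ω →+* Ω)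
      left_inv := fun x => by
        refine QuotientGroup.induction_on x fun u => ?_
        simp only [modEllMap, QuotientGroup.map_mk]
        exact congrArg QuotientGroup.mk (Units.ext (g.symm_apply_apply _))
      right_inv := fun x => by
        refine QuotientGroup.induction_on x fun u => ?_
        simp only [modEllMap, QuotientGroup.map_mk]
        exact congrArg QuotientGroup.mk (Units.ext (g.apply_symm_apply _))
      map_mul' := fun x y => map_mul _ x y }
  map_one' := by
    apply MulEquiv.ext
    intro x
    refine QuotientGroup.induction_on x fun u => ?_
    simp only [modEllMap, QuotientGroup.map_mk]
    exact congrArg QuotientGroup.mk (Units.ext rfl)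
  map_mul' g h := by
    apply MulEquiv.ext
    intro x
    refine QuotientGroup.induction_on x fun u => ?_
    simp only [modEllMap, QuotientGroup.map_mk]
    exact congrArg QuotientGroup.mk (Units.ext rfl)

end GaloisModules

/-! ### The relative Brauer group and natural maps -/

section Brauer

variable (ℓ : ℕ) (K Ω : Type*) [Field K] [Field Ω] [Algebra K Ω]

/-- The relative Brauer group `Br(Ω/K) = H²(Gal(Ω/K), Ω^×)` (continuous cohomology). -/
abbrev relBrauer : Type _ :=
  ContH2 (Ω ≃ₐ[K] Ω) Ωˣ (galUnitsAut K Ω)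

/-- `H²(Gal(Ω/K), μ_ℓ)` (continuous cohomology). -/
abbrev h2Mu : Type _ :=
  ContH2 (Ω ≃ₐ[K] Ω) ↥(rootsOfUnity ℓ Ω) (galMuAut K Ω ℓ)

/-- The natural map `H²(Gal(Ω/K), μ_ℓ) → Br(Ω/K)[ℓ]` induced by the inclusion
`μ_ℓ ⊆ Ω^×`. -/
def h2MuToBrTors :
    h2Mu ℓ K Ω →* ↥(torsionSub ℓ (relBrauer K Ω)) :=
  MonoidHom.codRestrict
    (h2Push (galMuAut K Ω ℓ) (rootsOfUnity ℓ Ω).subtype (fun _ _ => rfl))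
    (torsionSub ℓ (relBrauer K Ω)) (by
      intro x
      refine QuotientGroup.induction_on x fun f => ?_
      have h1 : (z2Push (galMuAut K Ω ℓ) (rootsOfUnity ℓ Ω).subtype (fun _ _ => rfl) f) ^ ℓ
          = 1 := by
        apply Subtype.ext
        funext g₁ g₂
        have hm : ((f.1 g₁ g₂ : ↥(rootsOfUnity ℓ Ω)) : Ωˣ) ^ ℓ = 1 := by
          have h2 := (f.1 g₁ g₂).2
          rwa [mem_rootsOfUnity] at h2
        calc ((z2Push (galMuAut K Ω ℓ) (rootsOfUnity ℓ Ω).subtype (fun _ _ => rfl) f ^ ℓ :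
                ↥(Z2 (Ω ≃ₐ[K] Ω) Ωˣ (galUnitsAut K Ω))) : (Ω ≃ₐ[K] Ω) → (Ω ≃ₐ[K] Ω) → Ωˣ) g₁ g₂
            = ((f.1 g₁ g₂ : ↥(rootsOfUnity ℓ Ω)) : Ωˣ) ^ ℓ := rfl
          _ = 1 := hm
      show _ ∈ torsionSub ℓ (relBrauer K Ω)
      have h2 : (QuotientGroup.mk'
          ((B2 (Ω ≃ₐ[K] Ω) Ωˣ (galUnitsAut K Ω)).subgroupOf (Z2 (Ω ≃ₐ[K] Ω) Ωˣ (galUnitsAut K Ω)))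
          (z2Push (galMuAut K Ω ℓ) (rootsOfUnity ℓ Ω).subtype (fun _ _ => rfl) f)) ^ ℓ = 1 := by
        rw [← map_pow, h1, map_one]
      exact h2)

/-- The natural map `K^×/K^{×ℓ} → H⁰(Gal(Ω/K), Ω^×/Ω^{×ℓ})` induced by the inclusion. -/
def modEllToH0 :
    modEll ℓ K →*
      ↥(ContH0 (Ω ≃ₐ[K] Ω) (modEll ℓ Ω) (galModEllAut K Ω ℓ)) :=
  MonoidHom.codRestrict (modEllMap ℓ (algebraMap K Ω)) _ (by
    intro x
    refine QuotientGroup.induction_on x fun u => ?_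
    intro g
    exact congrArg QuotientGroup.mk (Units.ext (g.commutes u)))

end Brauer

/-! ### Abundant extensions -/

section Abundance

variable {Ω : Type*} [Field Ω] [CharZero Ω]

/-- The copy of `ℚ_p` inside the completion of `Ω` at a (finite) place `𝔓`:
the closure of the prime field `ℚ`. -/
def Place.ratCompletion (𝔓 : Place Ω) : Subfield 𝔓.Compl :=
  Place.baseCompletion (Rat.castHom Ω) 𝔓

/-- `Ω_𝔓` contains the maximal tamely ramified extension of `ℚ_p`: equivalently, it
contains all roots of unity of order prime to `p`, together with an `n`-th root of `p`
for every `n` prime to `p`. -/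
def ContainsTameClosure (p : ℕ) (𝔓 : Place Ω) : Prop :=
  (∀ m : ℕ, 0 < m → ¬ p ∣ m →
    ∃ ζ : 𝔓.Compl, ζ ∈ 𝔓.localField ∧ IsPrimitiveRoot ζ m) ∧
  (∀ n : ℕ, 0 < n → ¬ p ∣ n →
    ∃ x : 𝔓.Compl, x ∈ 𝔓.localField ∧ x ^ n = (p : 𝔓.Compl))

/-- `Ω_𝔓` contains the `ℤ_p²`-extension of `ℚ_p`: equivalently (by the uniqueness of the
`ℤ_p²`-extension), `Ω_𝔓` contains a Galois extension of `ℚ_p` whose Galois group is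
topologically isomorphic to `ℤ_p × ℤ_p`. -/
def ContainsZpSquare (p : ℕ) [Fact p.Prime] (𝔓 : Place Ω) : Prop :=
  ∃ (E : Subfield 𝔓.Compl) (hQE : 𝔓.ratCompletion ≤ E),
    E ≤ 𝔓.localField ∧
    (letI : Algebra ↥(𝔓.ratCompletion) ↥E := (Subfield.inclusion hQE).toAlgebra
     IsGalois ↥(𝔓.ratCompletion) ↥E ∧
     ∃ e : (↥E ≃ₐ[↥(𝔓.ratCompletion)] ↥E) ≃* Multiplicative (ℤ_[p] × ℤ_[p]),
       Continuous e ∧ Continuous e.symm)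

/-- The local field `Ω_𝔓` is abundant (as an extension of `ℚ_p`). -/
def LocallyAbundant (p : ℕ) [Fact p.Prime] (𝔓 : Place Ω) : Prop :=
  ContainsTameClosure p 𝔓 ∨ ContainsZpSquare p 𝔓

/-- A set of natural numbers (thought of as a set of primes) has Dirichlet density zero. -/
def HasDirichletDensityZero (Z : Set ℕ) : Prop :=
  Filter.Tendsto
    (fun s : ℝ => (∑' q : Z, if Nat.Prime q.1 then (q.1 : ℝ) ^ (-s) else 0) /
      Real.log ((s - 1)⁻¹))
    (nhdsWithin 1 (Set.Ioi 1)) (nhds 0)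

/-- An algebraic extension `Ω/ℚ` is abundant if for all primes `p` outside a set of
Dirichlet density zero, the local field `Ω_𝔓` is abundant for every place `𝔓` over `p`. -/
def IsAbundant (Ω : Type*) [Field Ω] [CharZero Ω] : Prop :=
  ∃ Z : Set ℕ, HasDirichletDensityZero Z ∧
    ∀ (p : ℕ) (hp : p.Prime), p ∉ Z →
      haveI : Fact p.Prime := ⟨hp⟩
      ∀ 𝔓 : Place Ω, 𝔓.Over p → LocallyAbundant p 𝔓

/-- An abstract algebraic extension `Ξ` of `ℚ_p` contains the maximal tamely ramified
extension of `ℚ_p`. -/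
def ContainsTameClosureQp (p : ℕ) (Ξ : Type*) [Field Ξ] : Prop :=
  (∀ m : ℕ, 0 < m → ¬ p ∣ m → ∃ ζ : Ξ, IsPrimitiveRoot ζ m) ∧
  (∀ n : ℕ, 0 < n → ¬ p ∣ n → ∃ x : Ξ, x ^ n = (p : Ξ))

/-- An abstract algebraic extension `Ξ` of `ℚ_p` contains the `ℤ_p²`-extension of `ℚ_p`:
equivalently, it contains a Galois extension of `ℚ_p` with Galois group topologically
isomorphic to `ℤ_p × ℤ_p`. -/
def ContainsZpSquareQp (p : ℕ) [Fact p.Prime] (Ξ : Type*) [Field Ξ]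
    [Algebra ℚ_[p] Ξ] : Prop :=
  ∃ E : IntermediateField ℚ_[p] Ξ, IsGalois ℚ_[p] ↥E ∧
    ∃ e : (↥E ≃ₐ[ℚ_[p]] ↥E) ≃* Multiplicative (ℤ_[p] × ℤ_[p]),
      Continuous e ∧ Continuous e.symm

/-- An algebraic extension `Ξ/ℚ_p` is abundant if it contains the maximal tamely ramified
extension of `ℚ_p` or the `ℤ_p²`-extension of `ℚ_p`. -/
def IsAbundantQp (p : ℕ) [Fact p.Prime] (Ξ : Type*) [Field Ξ] [Algebra ℚ_[p] Ξ] : Prop :=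
  ContainsTameClosureQp p Ξ ∨ ContainsZpSquareQp p Ξ

end Abundance

/-! ### Some distinguished extensions of number fields -/

/-- The cyclotomic extension `K(μ_∞)` inside the algebraic closure of `K`. -/
def cycloInfExt (K : Type*) [Field K] : IntermediateField K (AlgebraicClosure K) :=
  IntermediateField.adjoin K {x : AlgebraicClosure K | ∃ n : ℕ, 0 < n ∧ x ^ n = 1}

/-- The extension `K(μ_ℓ)` inside the algebraic closure of `K`. -/
def cycloExt (ℓ : ℕ) (K : Type*) [Field K] : IntermediateField K (AlgebraicClosure K) :=
  IntermediateField.adjoin K {x : AlgebraicClosure K | x ^ ℓ = 1}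

/-- The maximal pro-`ℓ` extension of (the intermediate field) `L` inside the algebraic
closure of `K`: the compositum of all the finite Galois extensions of `L` of `ℓ`-power
degree. -/
def maxProEll (ℓ : ℕ) (K : Type*) [Field K] (L : IntermediateField K (AlgebraicClosure K)) :
    IntermediateField K (AlgebraicClosure K) :=
  ⨆ (M : IntermediateField ↥L (AlgebraicClosure K)) (_ : FiniteDimensional ↥L ↥M)
    (_ : IsGalois ↥L ↥M) (_ : ∃ k : ℕ, Module.finrank ↥L ↥M = ℓ ^ k),
    IntermediateField.restrictScalars K M

/-- The maximal tamely ramified extension of a number field `K`: the compositum of all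
finite extensions of `K` (inside the algebraic closure) which are tamely ramified at
every finite place. -/
def maxTameExt (K : Type*) [Field K] [NumberField K] :
    IntermediateField K (AlgebraicClosure K) :=
  ⨆ (L : IntermediateField K (AlgebraicClosure K)) (_ : FiniteDimensional K ↥L)
    (_ : IsTamelyRamified K ↥L), L

/-- The Dedekind zeta function of a number field, as a function on `ℂ`
(given by its Dirichlet series). -/
def dedekindZetaFun (K : Type*) [Field K] [NumberField K] : ℂ → ℂ := fun s =>
  ∑' I : {I : Ideal (NumberField.RingOfIntegers K) // I ≠ ⊥},
    (Ideal.absNorm I.1 : ℂ) ^ (-s)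

/-- `ℓ^∞` divides the supernatural degree `[E : F]`. -/
def EllInfinityDvd (ℓ : ℕ) (F E : Type*) [Field F] [Field E] [Algebra F E] : Prop :=
  ∀ n : ℕ, ∃ E' : IntermediateField F E,
    FiniteDimensional F ↥E' ∧ ℓ ^ n ∣ Module.finrank F ↥E'

/-- `ℓ` divides the supernatural order of a (closed) subgroup `H` of a profinite group:
`H` has an open subgroup whose index is divisible by `ℓ`. -/
def OrderDvd (ℓ : ℕ) {G : Type*} [Group G] [TopologicalSpace G] (H : Subgroup G) : Prop :=
  ∃ U : Subgroup ↥H, IsOpen (U : Set ↥H) ∧ ℓ ∣ U.index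

/-! Choose `y ∈ Ξ` with `y ^ ℓ ^ k = p`, where `k = n + v_ℓ([F : ℚ_p])`. The polynomial
`X ^ ℓ ^ k - p` is Eisenstein at `p`, hence the minimal polynomial of `y` over `ℚ_p`, so
`ℓ ^ k ∣ [F(y) : ℚ_p] = [F : ℚ_p] [F(y) : F]`, and therefore `ℓ ^ n ∣ [F(y) : F]`. -/

open Polynomial IntermediateField

theorem exists_pow_pow_eq {M : Type*} [Monoid M] {ℓ : ℕ} (h : ∀ x : M, ∃ y, y ^ ℓ = x) :
    ∀ (k : ℕ) (x : M), ∃ y, y ^ ℓ ^ k = x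
  | 0, x => ⟨x, pow_one x⟩
  | k + 1, x => by
    obtain ⟨z, rfl⟩ := h x
    obtain ⟨y, rfl⟩ := exists_pow_pow_eq h k z
    exact ⟨y, by rw [pow_succ, pow_mul]⟩

theorem _root_.Nat.Prime.pow_dvd_of_pow_add_factorization_dvd_mul {ℓ n d a : ℕ} (hℓ : ℓ.Prime)
    (hd : d ≠ 0) (h : ℓ ^ (n + d.factorization ℓ) ∣ d * a) : ℓ ^ n ∣ a := by
  rcases eq_or_ne a 0 with rfl | ha
  · exact dvd_zero _
  rw [hℓ.pow_dvd_iff_le_factorization (mul_ne_zero hd ha), Nat.factorization_mul hd ha,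
    Finsupp.add_apply] at h
  rw [hℓ.pow_dvd_iff_le_factorization ha]
  omega

theorem _root_.Prime.irreducible_X_pow_sub_C {R : Type*} [CommRing R] [IsDomain R] {π : R}
    (hπ : Prime π) {n : ℕ} (hn : n ≠ 0) : Irreducible (X ^ n - C π) := by
  have hmonic : (X ^ n - C π).Monic := monic_X_pow_sub_C π hn
  have hP : (Ideal.span {π}).IsPrime := (Ideal.span_singleton_prime hπ.ne_zero).mpr hπ
  refine IsEisensteinAt.irreducible (𝓟 := Ideal.span {π}) ?_ hP hmonic.isPrimitive
    (by rw [natDegree_X_pow_sub_C]; omega)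
  refine hmonic.isEisensteinAt_of_mem_of_notMem hP.ne_top (fun {m} hm => ?_) ?_
  · rw [natDegree_X_pow_sub_C] at hm
    rw [coeff_sub, coeff_X_pow, if_neg hm.ne, coeff_C]
    split_ifs <;> simp
  · rw [coeff_sub, coeff_X_pow, if_neg (Ne.symm hn), coeff_C_zero, zero_sub, Ideal.neg_mem_iff,
      Ideal.span_singleton_pow, Ideal.mem_span_singleton]
    exact hπ.not_dvd_one ∘ (mul_dvd_mul_iff_left hπ.ne_zero).mp ∘ by simp [sq]

theorem _root_.Prime.irreducible_X_pow_sub_C_algebraMap {R K : Type*} [CommRing R] [IsDomain R]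
    [IsIntegrallyClosed R] [Field K] [Algebra R K] [IsFractionRing R K] {π : R}
    (hπ : Prime π) {n : ℕ} (hn : n ≠ 0) : Irreducible (X ^ n - C (algebraMap R K π)) := by
  have := ((monic_X_pow_sub_C π hn).irreducible_iff_irreducible_map_fraction_map (K := K)).mp
    (hπ.irreducible_X_pow_sub_C hn)
  rwa [Polynomial.map_sub, Polynomial.map_pow, map_X, map_C] at this

theorem finiteDimensional_adjoin_of_aeval_eq_zero {K F E : Type*} [Field K] [Field F] [Field E]
    [Algebra K F] [Algebra F E] [Algebra K E] [IsScalarTower K F E] {f : K[X]} (hf : f ≠ 0)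
    {y : E} (hy : aeval y f = 0) : FiniteDimensional F F⟮y⟯ :=
  adjoin.finiteDimensional (IsAlgebraic.isIntegral ⟨f, hf, hy⟩).tower_top

theorem natDegree_dvd_finrank_mul_finrank_adjoin {K F E : Type*} [Field K] [Field F] [Field E]
    [Algebra K F] [Algebra F E] [Algebra K E] [IsScalarTower K F E] [FiniteDimensional K F]
    {f : K[X]} (hf : Irreducible f) {y : E} (hy : aeval y f = 0) :
    f.natDegree ∣ Module.finrank K F * Module.finrank F F⟮y⟯ := by
  have := finiteDimensional_adjoin_of_aeval_eq_zero (F := F) hf.ne_zero hy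
  rw [Module.finrank_mul_finrank K F F⟮y⟯]
  have hgen : aeval (AdjoinSimple.gen F y) f = 0 := by
    apply (algebraMap F⟮y⟯ E).injective
    rw [map_zero, ← aeval_map_algebraMap F, ← aeval_algebraMap_apply,
      AdjoinSimple.algebraMap_gen, aeval_map_algebraMap, hy]
  rw [← natDegree_mul_C (inv_ne_zero (leadingCoeff_ne_zero.mpr hf.ne_zero)),
    minpoly.eq_of_irreducible hf hgen]
  have : FiniteDimensional K F⟮y⟯ := .trans K F _
  exact minpoly.degree_dvd (IsIntegral.of_finite K _)

theorem ell_infinity_divides_degree_general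
    (ℓ p : ℕ) (hℓ : ℓ.Prime) [Fact p.Prime]
    (F : Type*) [Field F] [Algebra ℚ_[p] F] [FiniteDimensional ℚ_[p] F]
    (Ξ : Type*) [Field Ξ] [Algebra F Ξ]
    (hpow : ∀ x : Ξ, ∃ y : Ξ, y ^ ℓ = x) :
    ∀ n : ℕ, 1 ≤ n →
      ∃ F' : IntermediateField F Ξ,
        FiniteDimensional F ↥F' ∧ ℓ ^ n ∣ Module.finrank F ↥F' := by
  intro n _
  let : Algebra ℚ_[p] Ξ := ((algebraMap F Ξ).comp (algebraMap ℚ_[p] F)).toAlgebra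
  have : IsScalarTower ℚ_[p] F Ξ := .of_algebraMap_eq' rfl
  set k := n + (Module.finrank ℚ_[p] F).factorization ℓ
  obtain ⟨y, hy⟩ := exists_pow_pow_eq hpow k (p : Ξ)
  have hirr : Irreducible (X ^ ℓ ^ k - C (algebraMap ℤ_[p] ℚ_[p] p)) :=
    PadicInt.prime_p.irreducible_X_pow_sub_C_algebraMap (pow_ne_zero _ hℓ.ne_zero)
  have hroot : aeval y (X ^ ℓ ^ k - C (algebraMap ℤ_[p] ℚ_[p] p)) = 0 := by simp [hy]
  refine ⟨F⟮y⟯, finiteDimensional_adjoin_of_aeval_eq_zero hirr.ne_zero hroot, ?_⟩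
  have hdvd := natDegree_dvd_finrank_mul_finrank_adjoin (F := F) hirr hroot
  rw [natDegree_X_pow_sub_C] at hdvd
  exact hℓ.pow_dvd_of_pow_add_factorization_dvd_mul Module.finrank_pos.ne' hdvd

theorem ell_infinity_divides_degree
    (ℓ p : ℕ) (hℓ : ℓ.Prime) [Fact p.Prime]
    (F : Type*) [Field F] [Algebra ℚ_[p] F] [FiniteDimensional ℚ_[p] F]
    (Ξ : Type*) [Field Ξ] [Algebra F Ξ] [Algebra.IsAlgebraic F Ξ]
    (hμ : ∃ ζ : Ξ, IsPrimitiveRoot ζ ℓ)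
    (hpow : ∀ x : Ξ, ∃ y : Ξ, y ^ ℓ = x) :
    ∀ n : ℕ, 1 ≤ n →
      ∃ F' : IntermediateField F Ξ,
        FiniteDimensional F ↥F' ∧ ℓ ^ n ∣ Module.finrank F ↥F' :=
  ell_infinity_divides_degree_general ℓ p hℓ F Ξ hpow

end NU
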